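/- Let I be the unique set of primes such that the set of all primes is the disjoint union of I and P_I = {p_n : n ∈ I}. Then I equals the alternating sum of the higher-order prime sets, namely I = ⋃_{j≥1} (P^(2j−1) \ P^(2j)). -/
import Mathlib

noncomputable def nthPrime (n : ℕ) : ℕ := Nat.nth Nat.Prime (n - 1)

def indexedSet (S : Set ℕ) : Set ℕ := {m | ∃ n ∈ S, m = nthPrime n}

def P : ℕ → Set ℕ
  | 0 => ∅
  | 1 => {p | p.Prime}
  | (k + 2) => indexedSet (P (k + 1))

lemma infPrime : (setOf Nat.Prime).Infinite := Nat.infinite_setOf_prime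

lemma nthPrime_prime (n : ℕ) : (nthPrime n).Prime :=
  Nat.nth_mem_of_infinite infPrime _

lemma nth_ge (i : ℕ) : i + 2 ≤ Nat.nth Nat.Prime i := by
  induction i with
  | zero => simpa using (Nat.nth_mem_of_infinite infPrime 0).two_le
  | succ k ih =>
    have h2 := Nat.nth_strictMono infPrime (Nat.lt_succ_self k)
    simp only [Nat.succ_eq_add_one] at h2
    omega

lemma nthPrime_ge {n : ℕ} (hn : 1 ≤ n) : n + 1 ≤ nthPrime n := by
  have := nth_ge (n - 1)
  unfold nthPrime
  omega

lemma nthPrime_inj {a b : ℕ} (ha : 1 ≤ a) (hb : 1 ≤ b) (h : nthPrime a = nthPrime b) :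
    a = b := by
  have := Nat.nth_injective infPrime h
  omega

lemma indexedSet_union (A B : Set ℕ) : indexedSet (A ∪ B) = indexedSet A ∪ indexedSet B := by
  ext m
  simp only [indexedSet, Set.mem_setOf_eq, Set.mem_union]
  constructor
  · rintro ⟨n, hn | hn, rfl⟩
    · exact Or.inl ⟨n, hn, rfl⟩
    · exact Or.inr ⟨n, hn, rfl⟩
  · rintro (⟨n, hn, rfl⟩ | ⟨n, hn, rfl⟩)
    · exact ⟨n, Or.inl hn, rfl⟩
    · exact ⟨n, Or.inr hn, rfl⟩

lemma indexedSet_mono {A B : Set ℕ} (h : A ⊆ B) : indexedSet A ⊆ indexedSet B := by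
  rintro m ⟨n, hn, rfl⟩
  exact ⟨n, h hn, rfl⟩

/-- Elements of `P k` are at least `k + 1` (for `k ≥ 1`). -/
lemma P_ge : ∀ k, ∀ x ∈ P (k + 1), k + 2 ≤ x := by
  intro k
  induction k with
  | zero => intro x hx; exact hx.two_le
  | succ m ih =>
    rintro x ⟨n, hn, rfl⟩
    have h1 := ih n hn
    have := nthPrime_ge (by omega : 1 ≤ n)
    omega

lemma P_succ_subset : ∀ k, P (k + 2) ⊆ P (k + 1) := by
  intro k
  induction k with
  | zero =>
    rintro x ⟨n, _, rfl⟩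
    exact nthPrime_prime n
  | succ m ih =>
    show indexedSet (P (m + 2)) ⊆ indexedSet (P (m + 1))
    exact indexedSet_mono ih

lemma P_subset_P {a b : ℕ} (ha : 1 ≤ a) (h : a ≤ b) : P b ⊆ P a := by
  obtain ⟨d, rfl⟩ := Nat.exists_eq_add_of_le h
  clear h
  induction d with
  | zero => exact subset_rfl
  | succ m ih =>
    refine subset_trans ?_ ih
    have : a + m = (a + m - 1) + 1 := by omega
    rw [show a + (m + 1) = (a + m - 1) + 2 by omega, this]
    exact P_succ_subset _

/-- The unique set `I` of primes partitioning the primes into `I` and `P_I` equals the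
alternating sum of the higher-order prime sets: `I = ⋃_{j≥1} (P^(2j-1) \ P^(2j))`. -/
theorem index_set_eq_alternating_sum (I : Set ℕ)
    (hIprime : ∀ q ∈ I, Nat.Prime q)
    (hunion : {p : ℕ | p.Prime} = I ∪ indexedSet I)
    (hdisj : I ∩ indexedSet I = ∅) :
    I = ⋃ j : ℕ, (P (2 * (j + 1) - 1) \ P (2 * (j + 1))) := by
  set It : ℕ → Set ℕ := fun k => indexedSet^[k] I with hIt
  have hItsucc : ∀ k, It (k + 1) = indexedSet (It k) := by
    intro k; simp [hIt, Function.iterate_succ_apply']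
  -- the basic partition fact at every level
  have claim : ∀ k, It k ∪ It (k + 1) = P (k + 1) ∧ It k ∩ It (k + 1) = ∅ := by
    intro k
    induction k with
    | zero =>
      constructor
      · rw [hItsucc]; simp only [hIt, Function.iterate_zero, id_eq]
        exact hunion.symm
      · rw [hItsucc]; simp only [hIt, Function.iterate_zero, id_eq]
        exact hdisj
    | succ m ih =>
      obtain ⟨hu, hd⟩ := ih
      have hge : ∀ x, x ∈ It m ∪ It (m + 1) → 1 ≤ x := by
        intro x hx
        have := P_ge m x (hu ▸ hx)
        omega
      constructor
      · have step : It (m + 1) ∪ It (m + 2) = indexedSet (It m ∪ It (m + 1)) := by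
          rw [indexedSet_union, ← hItsucc m, ← hItsucc (m + 1)]
        rw [step, hu]
        rfl
      · ext x
        simp only [Set.mem_inter_iff, Set.mem_empty_iff_false, iff_false, not_and]
        intro h1 h2
        rw [hItsucc] at h1
        rw [hItsucc] at h2
        obtain ⟨a, ha, rfl⟩ := h1
        obtain ⟨b, hb', hab⟩ := h2
        have ha1 : 1 ≤ a := hge a (Or.inl ha)
        have hb1 : 1 ≤ b := hge b (Or.inr hb')
        have : a = b := nthPrime_inj ha1 hb1 hab
        subst this
        have : a ∈ It m ∩ It (m + 1) := ⟨ha, hb'⟩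
        rw [hd] at this
        exact this
  have hsub : ∀ k, It k ⊆ P (k + 1) := by
    intro k x hx
    exact (claim k).1 ▸ Or.inl hx
  have hdiff : ∀ k x, x ∈ It k ↔ x ∈ P (k + 1) ∧ x ∉ It (k + 1) := by
    intro k x
    obtain ⟨hu, hd⟩ := claim k
    constructor
    · intro hx
      refine ⟨hu ▸ Or.inl hx, fun hx' => ?_⟩
      have : x ∈ It k ∩ It (k + 1) := ⟨hx, hx'⟩
      rw [hd] at this; exact this
    · rintro ⟨h1, h2⟩
      have : x ∈ It k ∪ It (k + 1) := hu ▸ h1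
      rcases this with h | h
      · exact h
      · exact absurd h h2
  -- telescoping
  have htel : ∀ m x, x ∈ I ↔ (∃ j < m, x ∈ P (2 * j + 1) \ P (2 * j + 2)) ∨ x ∈ It (2 * m) := by
    intro m
    induction m with
    | zero =>
      intro x
      simp [hIt]
    | succ m ih =>
      intro x
      rw [ih x]
      have key : x ∈ It (2 * m) ↔ (x ∈ P (2 * m + 1) \ P (2 * m + 2)) ∨ x ∈ It (2 * (m + 1)) := by
        have h2 : x ∈ It (2 * m + 1) ↔ x ∈ P (2 * m + 2) ∧ x ∉ It (2 * m + 2) := hdiff (2 * m + 1) x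
        have hsub2 : It (2 * m + 2) ⊆ P (2 * m + 1) := by
          refine subset_trans (hsub (2 * m + 2)) (P_subset_P (by omega) (by omega))
        rw [hdiff (2 * m) x, h2]
        have h22 : (2 : ℕ) * (m + 1) = 2 * m + 2 := by ring
        rw [h22]
        constructor
        · rintro ⟨hp, hn⟩
          by_cases hx2 : x ∈ P (2 * m + 2)
          · right
            by_contra hcon
            exact hn ⟨hx2, hcon⟩
          · exact Or.inl ⟨hp, hx2⟩
        · rintro (⟨hp, hn⟩ | hx)
          · exact ⟨hp, fun hc => hn hc.1⟩
          · exact ⟨hsub2 hx, fun hc => hc.2 hx⟩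
      rw [key]
      constructor
      · rintro (⟨j, hj, hx⟩ | hx | hx)
        · exact Or.inl ⟨j, by omega, hx⟩
        · exact Or.inl ⟨m, by omega, hx⟩
        · exact Or.inr hx
      · rintro (⟨j, hj, hx⟩ | hx)
        · rcases Nat.lt_or_ge j m with h | h
          · exact Or.inl ⟨j, h, hx⟩
          · have : j = m := by omega
            subst this
            exact Or.inr (Or.inl hx)
        · exact Or.inr (Or.inr hx)
  ext x
  simp only [Set.mem_iUnion]
  have heq : ∀ j : ℕ, P (2 * (j + 1) - 1) \ P (2 * (j + 1)) = P (2 * j + 1) \ P (2 * j + 2) := by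
    intro j
    have h1 : 2 * (j + 1) - 1 = 2 * j + 1 := by omega
    have h2 : 2 * (j + 1) = 2 * j + 2 := by omega
    rw [h1, h2]
  constructor
  · intro hx
    rcases (htel (x + 1) x).1 hx with ⟨j, hj, hmem⟩ | hmem
    · exact ⟨j, (heq j).symm ▸ hmem⟩
    · have := P_ge (2 * (x + 1)) x (hsub _ hmem)
      omega
  · rintro ⟨j, hx⟩
    rw [heq j] at hx
    exact (htel (j + 1) x).2 (Or.inl ⟨j, by omega, hx⟩)
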